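/- arXiv:2011.14449 — 5 statements merged into one kernel-verified Lean document; each statement's English description precedes it below -/
import Mathlib

section
/- Let Λ' be a relatively dense subset of ℝ^d and T : ℝ^d → ℝ^s a linear map. Then the operator norm of T equals the supremum over nonzero t ∈ Λ' of ‖T(t/‖t‖)‖. -/
/-- For a relatively dense set Λ' in ℝ^d and a linear map T : ℝ^d → ℝ^s, the operator
norm of T equals the supremum over nonzero t ∈ Λ' of ‖T(t/‖t‖)‖. -/
theorem stmt1 {d s : ℕ} (Λ' : Set (EuclideanSpace ℝ (Fin d)))
    (hrel : ∃ R > 0, ∀ x : EuclideanSpace ℝ (Fin d), ∃ t ∈ Λ', dist x t ≤ R)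
    (T : EuclideanSpace ℝ (Fin d) →L[ℝ] EuclideanSpace ℝ (Fin s)) :
    ‖T‖ = ⨆ t : {t : EuclideanSpace ℝ (Fin d) // t ∈ Λ' ∧ t ≠ 0}, ‖T (‖t.1‖⁻¹ • t.1)‖ := by
  obtain ⟨R, hR, hΛ⟩ := hrel
  set ι := {t : EuclideanSpace ℝ (Fin d) // t ∈ Λ' ∧ t ≠ 0} with hι
  set f : ι → ℝ := fun t => ‖T (‖t.1‖⁻¹ • t.1)‖ with hfdef
  have hfb : ∀ i : ι, f i ≤ ‖T‖ := by
    intro i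
    have h1 : ‖(‖i.1‖⁻¹ • i.1 : EuclideanSpace ℝ (Fin d))‖ = 1 := by
      rw [norm_smul, norm_inv, norm_norm]
      exact inv_mul_cancel₀ (norm_ne_zero_iff.mpr i.2.2)
    calc f i ≤ ‖T‖ * ‖(‖i.1‖⁻¹ • i.1 : EuclideanSpace ℝ (Fin d))‖ := T.le_opNorm _
      _ = ‖T‖ := by rw [h1, mul_one]
  have hbdd : BddAbove (Set.range f) := ⟨‖T‖, by rintro _ ⟨i, rfl⟩; exact hfb i⟩
  by_cases hne : Nonempty ι
  · set C := ⨆ i : ι, f i with hC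
    have hC0 : 0 ≤ C := le_trans (norm_nonneg _) (le_ciSup hbdd hne.some)
    refine le_antisymm ?_ (ciSup_le hfb)
    refine T.opNorm_le_bound hC0 ?_
    intro x
    rcases eq_or_ne x 0 with rfl | hx
    · simp
    · have hxn : (0:ℝ) < ‖x‖ := norm_pos_iff.mpr hx
      set u : EuclideanSpace ℝ (Fin d) := ‖x‖⁻¹ • x with hu
      have hun : ‖u‖ = 1 := by
        rw [hu, norm_smul, norm_inv, norm_norm]; exact inv_mul_cancel₀ hxn.ne'
      have key : ∀ r : ℝ, R < r → ‖T u‖ ≤ C + 2 * R * ‖T‖ / r := by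
        intro r hr
        have hr0 : 0 < r := hR.trans hr
        obtain ⟨t, htΛ, htd⟩ := hΛ (r • u)
        have hru : ‖r • u‖ = r := by
          rw [norm_smul, hun, mul_one, Real.norm_of_nonneg hr0.le]
        have hdiff : ‖r • u - t‖ ≤ R := by rwa [← dist_eq_norm]
        have habs : |‖t‖ - r| ≤ R := by
          have h := abs_norm_sub_norm_le t (r • u)
          rw [hru, norm_sub_rev] at h
          exact h.trans hdiff
        have htnorm : r - R ≤ ‖t‖ := by
          have := (abs_le.mp habs).1
          linarith
        have ht0 : (0:ℝ) < ‖t‖ := by linarith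
        have htne : t ≠ 0 := norm_ne_zero_iff.mp ht0.ne'
        have h1 : ‖u - r⁻¹ • t‖ ≤ R / r := by
          have heq : u - r⁻¹ • t = r⁻¹ • (r • u - t) := by
            rw [smul_sub, smul_smul, inv_mul_cancel₀ hr0.ne', one_smul]
          rw [heq, norm_smul, norm_inv, Real.norm_of_nonneg hr0.le, div_eq_inv_mul]
          gcongr
        have h2 : ‖r⁻¹ • t - ‖t‖⁻¹ • t‖ ≤ R / r := by
          have heq : r⁻¹ • t - ‖t‖⁻¹ • t = (r⁻¹ - ‖t‖⁻¹) • t := (sub_smul _ _ _).symm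
          rw [heq, norm_smul, Real.norm_eq_abs]
          have hval : r⁻¹ - ‖t‖⁻¹ = (‖t‖ - r) / (r * ‖t‖) := by
            field_simp
          rw [hval, abs_div, abs_of_pos (mul_pos hr0 ht0)]
          rw [div_mul_eq_mul_div, mul_comm r ‖t‖, ← div_div, mul_div_assoc,
            div_self ht0.ne', mul_one]
          gcongr
        have hclose : ‖u - ‖t‖⁻¹ • t‖ ≤ 2 * R / r := by
          have heq : u - ‖t‖⁻¹ • t = (u - r⁻¹ • t) + (r⁻¹ • t - ‖t‖⁻¹ • t) := by abel
          calc ‖u - ‖t‖⁻¹ • t‖ ≤ ‖u - r⁻¹ • t‖ + ‖r⁻¹ • t - ‖t‖⁻¹ • t‖ := by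
                rw [heq]; exact norm_add_le _ _
            _ ≤ R / r + R / r := add_le_add h1 h2
            _ = 2 * R / r := by ring
        have hfle : ‖T (‖t‖⁻¹ • t)‖ ≤ C := le_ciSup hbdd (⟨t, htΛ, htne⟩ : ι)
        have hsplit : T u = T (‖t‖⁻¹ • t) + T (u - ‖t‖⁻¹ • t) := by
          rw [← map_add]; congr 1; abel
        calc ‖T u‖ ≤ ‖T (‖t‖⁻¹ • t)‖ + ‖T (u - ‖t‖⁻¹ • t)‖ := by
              rw [hsplit]; exact norm_add_le _ _
          _ ≤ C + ‖T‖ * ‖u - ‖t‖⁻¹ • t‖ := add_le_add hfle (T.le_opNorm _)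
          _ ≤ C + ‖T‖ * (2 * R / r) := by gcongr
          _ = C + 2 * R * ‖T‖ / r := by ring
      have hTu : ‖T u‖ ≤ C := by
        refine le_of_forall_pos_le_add ?_
        intro ε hε
        obtain ⟨n, hn⟩ := exists_nat_gt (max R (2 * R * ‖T‖ / ε))
        set r : ℝ := (n : ℝ) + 1 with hrdef
        have hrR : R < r := by
          have := (le_max_left R (2 * R * ‖T‖ / ε)).trans_lt hn
          linarith
        have hr0 : 0 < r := hR.trans hrR
        have hrε : 2 * R * ‖T‖ / r ≤ ε := by
          have h2 : 2 * R * ‖T‖ / ε < r := by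
            have := (le_max_right R (2 * R * ‖T‖ / ε)).trans_lt hn
            linarith
          have := (div_lt_iff₀ hε).mp h2
          rw [div_le_iff₀ hr0]
          nlinarith
        calc ‖T u‖ ≤ C + 2 * R * ‖T‖ / r := key r hrR
          _ ≤ C + ε := by linarith
      have hxu : x = ‖x‖ • u := by
        rw [hu, smul_smul, mul_inv_cancel₀ hxn.ne', one_smul]
      calc ‖T x‖ = ‖T (‖x‖ • u)‖ := by rw [← hxu]
        _ = ‖x‖ * ‖T u‖ := by
            rw [map_smul, norm_smul, norm_norm]
        _ ≤ ‖x‖ * C := by gcongr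
        _ = C * ‖x‖ := mul_comm _ _
  · have hzero : ∀ x : EuclideanSpace ℝ (Fin d), x = 0 := by
      have hball : ∀ x : EuclideanSpace ℝ (Fin d), ‖x‖ ≤ R := by
        intro x
        obtain ⟨t, htΛ, htd⟩ := hΛ x
        have ht0 : t = 0 := by
          by_contra h
          exact hne ⟨⟨t, htΛ, h⟩⟩
        rw [ht0, dist_zero_right] at htd
        exact htd
      intro x
      by_contra hx
      have hxn : (0:ℝ) < ‖x‖ := norm_pos_iff.mpr hx
      have := hball (((R + 1) * ‖x‖⁻¹) • x)
      rw [norm_smul, Real.norm_eq_abs, abs_of_pos (by positivity), mul_assoc,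
        inv_mul_cancel₀ hxn.ne', mul_one] at this
      linarith
    have hT0 : ‖T‖ = 0 := by
      refine le_antisymm (T.opNorm_le_bound le_rfl fun x => ?_) (norm_nonneg T)
      rw [hzero x]; simp
    haveI : IsEmpty ι := not_nonempty_iff.mp hne
    rw [hT0, iSup_of_empty', Real.sSup_empty]
end

section
/- Let Λ ⊆ ℝ^d be relatively dense, G ≤ ℝ^d a subgroup with Λ ⊆ G, φ : G → ℤ^s additive, and ℓ : ℝ^d → ℝ^s a linear map with sup_{t∈Λ} ‖φ(t) − ℓ(t)‖ < ∞. If φ restricted to Λ has the property that φ(t) determines t (i.e., the restriction of φ to the subgroup generated by Λ is injective), and Λ is infinite in every direction (relatively dense), then ℓ is injective. -/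
lemma coord_le_norm {s : ℕ} (x : EuclideanSpace ℝ (Fin s)) (i : Fin s) :
    |x i| ≤ ‖x‖ := by
  rw [EuclideanSpace.norm_eq]
  have h : |x i| = Real.sqrt (‖x i‖ ^ 2) := by
    rw [Real.sqrt_sq_eq_abs]; simp [abs_abs]
  rw [h]
  apply Real.sqrt_le_sqrt
  exact Finset.single_le_sum (f := fun j => ‖x j‖ ^ 2)
    (fun j _ => by positivity) (Finset.mem_univ i)

/-- If the address map φ is injective on the subgroup generated by a relatively dense set Λ
and ℓ approximates φ uniformly on Λ, then ℓ is injective. -/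
theorem stmt4 {d s : ℕ} (Λ : Set (EuclideanSpace ℝ (Fin d)))
    (G : AddSubgroup (EuclideanSpace ℝ (Fin d)))
    (hΛG : ∀ t ∈ Λ, t ∈ G)
    (hrel : ∃ R > 0, ∀ x : EuclideanSpace ℝ (Fin d), ∃ t ∈ Λ, dist x t ≤ R)
    (φ : G →+ (Fin s → ℤ))
    (hinj : ∀ x y : G, (x : EuclideanSpace ℝ (Fin d)) ∈ AddSubgroup.closure Λ →
      (y : EuclideanSpace ℝ (Fin d)) ∈ AddSubgroup.closure Λ → φ x = φ y → x = y)
    (ℓ : EuclideanSpace ℝ (Fin d) →ₗ[ℝ] EuclideanSpace ℝ (Fin s))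
    (hbdd : ∃ C : ℝ, ∀ t, ∀ ht : t ∈ Λ,
      ‖(show EuclideanSpace ℝ (Fin s) from WithLp.toLp 2 fun i => ((φ ⟨t, hΛG t ht⟩ i : ℤ) : ℝ)) - ℓ t‖ ≤ C) :
    Function.Injective ℓ := by
  obtain ⟨R, hR, hdense⟩ := hrel
  obtain ⟨C, hC⟩ := hbdd
  rw [← LinearMap.ker_eq_bot, LinearMap.ker_eq_bot']
  intro x hx
  by_contra hxne
  -- rescale x to have norm 2R+1
  set y : EuclideanSpace ℝ (Fin d) := ((2 * R + 1) / ‖x‖) • x with hy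
  have hxnorm : ‖x‖ ≠ 0 := by simpa using hxne
  have hynorm : ‖y‖ = 2 * R + 1 := by
    rw [hy, norm_smul, norm_div, Real.norm_eq_abs, abs_of_pos (by linarith)]
    field_simp
    rw [norm_norm]
  have hly : ℓ y = 0 := by rw [hy, map_smul, hx, smul_zero]
  -- choose t n ∈ Λ near n • y
  choose t ht hdist using fun n : ℕ => hdense ((n : ℝ) • y)
  -- ℓ continuous
  let L := LinearMap.toContinuousLinearMap ℓ
  -- bound on φ (t n)
  have hbound : ∀ n : ℕ, ∀ i, (φ ⟨t n, hΛG _ (ht n)⟩ i : ℝ) ∈ Set.Icc (-(C + ‖L‖ * R)) (C + ‖L‖ * R) := by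
    intro n i
    set v : EuclideanSpace ℝ (Fin s) :=
      WithLp.toLp 2 (fun i => ((φ ⟨t n, hΛG _ (ht n)⟩ i : ℤ) : ℝ)) with hv
    have h1 : ‖v - ℓ (t n)‖ ≤ C := hC (t n) (ht n)
    have h2 : ‖ℓ (t n)‖ ≤ ‖L‖ * R := by
      have : ℓ (t n) = L (t n - (n : ℝ) • y) := by
        simp only [L, map_sub, LinearMap.coe_toContinuousLinearMap']
        rw [map_smul, hly, smul_zero, sub_zero]
      rw [this]
      calc ‖L (t n - (n : ℝ) • y)‖ ≤ ‖L‖ * ‖t n - (n : ℝ) • y‖ := L.le_opNorm _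
        _ ≤ ‖L‖ * R := by
            apply mul_le_mul_of_nonneg_left _ (norm_nonneg L)
            rw [← dist_eq_norm, dist_comm]
            exact hdist n
    have h3 : ‖v‖ ≤ C + ‖L‖ * R := by
      calc ‖v‖ = ‖(v - ℓ (t n)) + ℓ (t n)‖ := by rw [sub_add_cancel]
        _ ≤ ‖v - ℓ (t n)‖ + ‖ℓ (t n)‖ := norm_add_le _ _
        _ ≤ C + ‖L‖ * R := add_le_add h1 h2
    have h4 : |v i| ≤ C + ‖L‖ * R := (coord_le_norm v i).trans h3
    have : v i = ((φ ⟨t n, hΛG _ (ht n)⟩ i : ℤ) : ℝ) := rfl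
    rw [Set.mem_Icc, ← this]
    constructor <;> [linarith [neg_abs_le (v i)]; linarith [le_abs_self (v i)]]
  -- φ (t n) lands in a finite set
  set M : ℤ := ⌊C + ‖L‖ * R⌋ with hM
  set S : Finset (Fin s → ℤ) := Fintype.piFinset (fun _ => Finset.Icc (-M) M) with hS
  have hmem : ∀ n : ℕ, φ ⟨t n, hΛG _ (ht n)⟩ ∈ S := by
    intro n
    rw [hS, Fintype.mem_piFinset]
    intro i
    obtain ⟨h1, h2⟩ := hbound n i
    rw [Finset.mem_Icc]
    constructor
    · rw [← neg_le]
      exact_mod_cast Int.le_floor.mpr (by push_cast; linarith)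
    · exact Int.le_floor.mpr h2
  -- pigeonhole on range (S.card + 1)
  obtain ⟨m, hm, n, hn, hmn, heq⟩ :=
    Finset.exists_ne_map_eq_of_card_lt_of_maps_to
      (s := Finset.range (S.card + 1)) (t := S)
      (by simp) (fun n _ => hmem n)
  -- injectivity gives t m = t n
  have htmn : t m = t n := by
    have := hinj ⟨t m, hΛG _ (ht m)⟩ ⟨t n, hΛG _ (ht n)⟩
      (AddSubgroup.subset_closure (ht m)) (AddSubgroup.subset_closure (ht n)) heq
    exact Subtype.ext_iff.mp this
  -- distance contradiction
  have hd : dist ((m : ℝ) • y) ((n : ℝ) • y) ≤ 2 * R := by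
    calc dist ((m : ℝ) • y) ((n : ℝ) • y)
        ≤ dist ((m : ℝ) • y) (t m) + dist (t m) ((n : ℝ) • y) := dist_triangle _ _ _
      _ ≤ R + R := by
          apply add_le_add (hdist m)
          rw [htmn, dist_comm]; exact hdist n
      _ = 2 * R := by ring
  have hd2 : dist ((m : ℝ) • y) ((n : ℝ) • y) = |(m : ℝ) - n| * (2 * R + 1) := by
    rw [dist_eq_norm, ← sub_smul, norm_smul, Real.norm_eq_abs, hynorm]
  have h1le : (1 : ℝ) ≤ |(m : ℝ) - n| := by
    have : (m : ℤ) ≠ n := by exact_mod_cast hmn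
    have h := Int.one_le_abs (sub_ne_zero.mpr this)
    calc (1:ℝ) ≤ |((m : ℤ) - n : ℤ)| := by exact_mod_cast h
      _ = |(m : ℝ) - n| := by push_cast; ring_nf
  nlinarith [hd2 ▸ hd]
end

section
/- Let ℓ : ℝ^d → ℝ^s be linear with representing matrix A (in canonical bases), and consider the ℝ^d-action on the torus 𝕋^s = ℝ^s/ℤ^s given by (w, t) ↦ w + [ℓ(t)]. This action is minimal if and only if Ker(Aᵀ) ∩ ℤ^s = {0}. -/
open MeasureTheory Set TopologicalSpace

noncomputable section
namespace Stmt6Aux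

set_option linter.unusedSectionVars false

variable {G : Type*} [AddCommGroup G] [TopologicalSpace G] [IsTopologicalAddGroup G]
  [CompactSpace G] [T2Space G] [MeasurableSpace G] [BorelSpace G]

lemma integrable_cm {E : Type*} [NormedAddCommGroup E] [NormedSpace ℝ E]
    [SecondCountableTopology E]
    (μ : Measure G) [IsFiniteMeasure μ] (f : C(G, E)) :
    Integrable f μ :=
  (integrable_const ‖f‖).mono' f.continuous.aestronglyMeasurable
    (Filter.Eventually.of_forall fun x => f.norm_coe_le_norm x)

lemma char_integral_eq_zero (μ : Measure G) [μ.IsAddRightInvariant]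
    (φ : G → ℂ) (hadd : ∀ x y, φ (x + y) = φ x * φ y) {y : G} (hy : φ y ≠ 1) :
    ∫ x, φ x ∂μ = 0 := by
  have h : ∫ x, φ (x + y) ∂μ = ∫ x, φ x ∂μ := integral_add_right_eq_self φ y
  simp_rw [hadd] at h
  rw [integral_mul_const] at h
  by_contra h0
  exact hy (mul_left_cancel₀ h0 (by rw [h, mul_one]))

lemma prob_haar [Nonempty G] :
    IsProbabilityMeasure (Measure.addHaarMeasure (⊤ : PositiveCompacts G)) :=
  ⟨by simpa using Measure.addHaarMeasure_self (K₀ := (⊤ : PositiveCompacts G))⟩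

lemma dense_subgroup_of_characters {ι : Type*} [AddCommGroup ι]
    (e : ι → C(G, ℂ))
    (he_pt : ∀ (a : ι) (x y : G), e a (x + y) = e a x * e a y)
    (he_add : ∀ (a b : ι) (x : G), e (a + b) x = e a x * e b x)
    (he_zero : ∀ x : G, e 0 x = 1)
    (he_neg : ∀ (a : ι) (x : G), e (-a) x = (starRingEnd ℂ) (e a x))
    (he_sep : ∀ x y : G, x ≠ y → ∃ a, e a x ≠ e a y)
    (H : AddSubgroup G)
    (hH : ∀ a : ι, (∀ x ∈ H, e a x = 1) → ∀ x, e a x = 1) :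
    Dense (H : Set G) := by
  by_contra hdense
  obtain ⟨x0, hx0⟩ : ∃ x0, x0 ∉ closure (H : Set G) := by
    by_contra h; push_neg at h; exact hdense h
  haveI : Nonempty G := ⟨0⟩
  set K : AddSubgroup G := H.topologicalClosure with hK
  have hKcar : (K : Set G) = closure (H : Set G) := rfl
  have hKc : IsClosed (K : Set G) := H.isClosed_topologicalClosure
  haveI : CompactSpace K := isCompact_iff_compactSpace.mp (hKc.isCompact)
  haveI : Nonempty K := ⟨0⟩
  haveI : BorelSpace K := Subtype.borelSpace (K : Set G)
  set ν : Measure G := Measure.addHaarMeasure (⊤ : PositiveCompacts G) with hν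
  set μK : Measure K := Measure.addHaarMeasure (⊤ : PositiveCompacts K) with hμK
  haveI : IsProbabilityMeasure ν := prob_haar
  haveI : IsProbabilityMeasure μK := prob_haar
  have hval : Measurable (Subtype.val : K → G) := continuous_subtype_val.measurable
  set μ : Measure G := μK.map (Subtype.val) with hμ
  haveI : IsProbabilityMeasure μ := Measure.isProbabilityMeasure_map hval.aemeasurable
  -- integral against μ is integral over K
  have hint_map : ∀ f : C(G, ℂ), ∫ x, f x ∂μ = ∫ k : K, f ↑k ∂μK := by
    intro f
    rw [hμ, integral_map hval.aemeasurable f.continuous.aestronglyMeasurable]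
  -- characters have equal integrals
  have hchar : ∀ a : ι, ∫ x, (e a) x ∂μ = ∫ x, (e a) x ∂ν := by
    intro a
    by_cases htriv : ∀ x, e a x = 1
    · simp only [htriv]
      rw [integral_const, integral_const]
      simp
    · have hHx : ∃ x ∈ H, e a x ≠ 1 := by
        by_contra hcon; push_neg at hcon; exact htriv (hH a hcon)
      obtain ⟨y, hyH, hy⟩ := hHx
      have hyK : y ∈ K := H.le_topologicalClosure hyH
      have hμ0 : ∫ x, (e a) x ∂μ = 0 := by
        rw [hint_map]
        exact char_integral_eq_zero μK (fun k : K => e a ↑k)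
          (fun x y => by rw [← he_pt a ↑x ↑y]; rfl) (y := ⟨y, hyK⟩) hy
      have hν0 : ∫ x, (e a) x ∂ν = 0 :=
        char_integral_eq_zero ν (e a) (he_pt a) hy
      rw [hμ0, hν0]
  -- the star subalgebra generated by characters
  let S : StarSubalgebra ℂ C(G, ℂ) :=
    { toSubalgebra := Algebra.adjoin ℂ (Set.range e)
      star_mem' := by
        intro g hg
        revert g
        show Algebra.adjoin ℂ (Set.range e) ≤ star (Algebra.adjoin ℂ (Set.range e))
        refine Algebra.adjoin_le ?_
        rintro - ⟨a, rfl⟩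
        exact Algebra.subset_adjoin ⟨-a, ContinuousMap.ext fun x => he_neg a x⟩ }
  have hSsep : S.SeparatesPoints := by
    intro x y hxy
    obtain ⟨a, ha⟩ := he_sep x y hxy
    exact ⟨_, ⟨e a, Algebra.subset_adjoin ⟨a, rfl⟩, rfl⟩, ha⟩
  have hSdense : S.topologicalClosure = ⊤ :=
    ContinuousMap.starSubalgebra_topologicalClosure_eq_top_of_separatesPoints S hSsep
  have hcoe : Subalgebra.toSubmodule S.toSubalgebra = Submodule.span ℂ (Set.range e) := by
    apply Algebra.adjoin_eq_span_of_subset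
    refine Set.Subset.trans ?_ Submodule.subset_span
    intro g hg
    refine Submonoid.closure_induction (fun _ => id) ⟨0, ?_⟩ ?_ hg
    · exact ContinuousMap.ext fun x => he_zero x
    · rintro - - - - ⟨a, rfl⟩ ⟨b, rfl⟩
      exact ⟨a + b, ContinuousMap.ext fun x => he_add a b x⟩
  have hS_int : ∀ g ∈ Submodule.span ℂ (Set.range e), ∫ x, g x ∂μ = ∫ x, g x ∂ν := by
    intro g hg
    induction hg using Submodule.span_induction with
    | mem g hgmem => obtain ⟨a, rfl⟩ := hgmem; exact hchar a
    | zero => simp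
    | add g1 g2 _ _ h1 h2 =>
        simp only [ContinuousMap.coe_add, Pi.add_apply]
        rw [integral_add (integrable_cm μ g1) (integrable_cm μ g2),
          integral_add (integrable_cm ν g1) (integrable_cm ν g2), h1, h2]
    | smul c g _ h =>
        simp only [ContinuousMap.coe_smul, Pi.smul_apply, smul_eq_mul]
        rw [integral_const_mul, integral_const_mul, h]
  have key : ∀ f : C(G, ℂ), ∫ x, f x ∂μ = ∫ x, f x ∂ν := by
    intro f
    have happrox : ∀ ε : ℝ, 0 < ε → ‖∫ x, f x ∂μ - ∫ x, f x ∂ν‖ ≤ 0 + ε := by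
      intro ε hε
      have hf_mem : f ∈ closure (S : Set C(G, ℂ)) := by
        have h1 : f ∈ (S.topologicalClosure : Set C(G, ℂ)) := by rw [hSdense]; trivial
        exact h1
      obtain ⟨g, hgS, hgdist⟩ := Metric.mem_closure_iff.mp hf_mem (ε / 2) (by positivity)
      have hgint : ∫ x, g x ∂μ = ∫ x, g x ∂ν := by
        apply hS_int
        have h2 : g ∈ Subalgebra.toSubmodule S.toSubalgebra := hgS
        rwa [hcoe] at h2
      have hbd : ∀ x, ‖f x - g x‖ ≤ ε / 2 := by
        intro x
        calc ‖f x - g x‖ = ‖(f - g) x‖ := by simp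
        _ ≤ ‖f - g‖ := (f - g).norm_coe_le_norm x
        _ = dist f g := (dist_eq_norm f g).symm
        _ ≤ ε / 2 := le_of_lt hgdist
      have hμb : ‖∫ x, f x ∂μ - ∫ x, g x ∂μ‖ ≤ ε / 2 := by
        rw [← integral_sub (integrable_cm μ f) (integrable_cm μ g)]
        calc ‖∫ x, (f x - g x) ∂μ‖ ≤ ε / 2 * (μ Set.univ).toReal :=
              norm_integral_le_of_norm_le_const (Filter.Eventually.of_forall hbd)
        _ = ε / 2 := by simp
      have hνb : ‖∫ x, f x ∂ν - ∫ x, g x ∂ν‖ ≤ ε / 2 := by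
        rw [← integral_sub (integrable_cm ν f) (integrable_cm ν g)]
        calc ‖∫ x, (f x - g x) ∂ν‖ ≤ ε / 2 * (ν Set.univ).toReal :=
              norm_integral_le_of_norm_le_const (Filter.Eventually.of_forall hbd)
        _ = ε / 2 := by simp
      calc ‖∫ x, f x ∂μ - ∫ x, f x ∂ν‖
          = ‖(∫ x, f x ∂μ - ∫ x, g x ∂μ) - (∫ x, f x ∂ν - ∫ x, g x ∂ν)‖ := by
            rw [hgint]; ring_nf
      _ ≤ ‖∫ x, f x ∂μ - ∫ x, g x ∂μ‖ + ‖∫ x, f x ∂ν - ∫ x, g x ∂ν‖ := norm_sub_le _ _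
      _ ≤ ε / 2 + ε / 2 := add_le_add hμb hνb
      _ = 0 + ε := by ring
    have : ‖∫ x, f x ∂μ - ∫ x, f x ∂ν‖ ≤ 0 := le_of_forall_pos_le_add happrox
    have := norm_le_zero_iff.mp this
    exact sub_eq_zero.mp this
  -- Urysohn function separating K from x0
  have hdisj : Disjoint (K : Set G) {x0} := by
    rw [Set.disjoint_singleton_right, hKcar]
    exact hx0
  obtain ⟨f, hf0, hf1, hf01⟩ := exists_continuous_zero_one_of_isClosed hKc isClosed_singleton hdisj
  let F : C(G, ℂ) := ⟨fun x => (f x : ℂ), Complex.continuous_ofReal.comp f.continuous⟩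
  have h1 : ∫ x, F x ∂μ = 0 := by
    rw [hint_map]
    have hz : ∀ k : K, F ↑k = 0 := by
      intro k
      have : f ↑k = 0 := hf0 k.2
      simp [F, this]
    calc (∫ k : K, F ↑k ∂μK) = ∫ _k : K, (0 : ℂ) ∂μK := by simp [hz]
    _ = 0 := integral_zero _ _
  have h2 : ∫ x, F x ∂ν = ((∫ x, f x ∂ν : ℝ) : ℂ) := integral_ofReal
  have h3 : 0 < ∫ x, f x ∂ν := by
    rw [integral_pos_iff_support_of_nonneg (fun x => (hf01 x).1) (integrable_cm ν f)]
    have hopen : IsOpen (Function.support f) := by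
      have : Function.support f = f ⁻¹' ({0}ᶜ) := rfl
      rw [this]
      exact isOpen_compl_singleton.preimage f.continuous
    have hx0s : x0 ∈ Function.support f := by
      have : f x0 = 1 := hf1 rfl
      simp [Function.mem_support, this]
    exact hopen.measure_pos ν ⟨x0, hx0s⟩
  have hkey := key F
  rw [h1, h2] at hkey
  exact absurd (Complex.ofReal_eq_zero.mp hkey.symm) (ne_of_gt h3)

instance factZeroLtOne : Fact ((0 : ℝ) < 1) := ⟨one_pos⟩

variable {s : ℕ}

def eC (k : Fin s → ℤ) : C((Fin s → AddCircle (1 : ℝ)), ℂ) :=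
  { toFun := fun x => ∏ i, fourier (k i) (x i)
    continuous_toFun := continuous_finset_prod _ fun i _ =>
      (map_continuous (fourier (k i))).comp (continuous_apply i) }

lemma eC_apply (k : Fin s → ℤ) (x : Fin s → AddCircle (1 : ℝ)) :
    eC k x = ∏ i, fourier (k i) (x i) := rfl

lemma fourier_pt_add {T₀ : ℝ} (n : ℤ) (x y : AddCircle T₀) :
    fourier n (x + y) = fourier n x * fourier n y := by
  rw [fourier_apply, fourier_apply, fourier_apply, smul_add, AddCircle.toCircle_add]
  simp

lemma eC_pt_add (k : Fin s → ℤ) (x y : Fin s → AddCircle (1 : ℝ)) :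
    eC k (x + y) = eC k x * eC k y := by
  simp only [eC_apply, Pi.add_apply, fourier_pt_add, Finset.prod_mul_distrib]

lemma eC_add (k l : Fin s → ℤ) (x : Fin s → AddCircle (1 : ℝ)) :
    eC (k + l) x = eC k x * eC l x := by
  simp only [eC_apply, Pi.add_apply, fourier_add, Finset.prod_mul_distrib]

lemma eC_zero (x : Fin s → AddCircle (1 : ℝ)) : eC (0 : Fin s → ℤ) x = 1 := by
  simp only [eC_apply, Pi.zero_apply, fourier_zero, Finset.prod_const_one]

lemma eC_neg (k : Fin s → ℤ) (x : Fin s → AddCircle (1 : ℝ)) :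
    eC (-k) x = (starRingEnd ℂ) (eC k x) := by
  simp only [eC_apply, Pi.neg_apply, fourier_neg, map_prod]

lemma eC_sep (x y : Fin s → AddCircle (1 : ℝ)) (h : x ≠ y) : ∃ k, eC k x ≠ eC k y := by
  obtain ⟨i, hi⟩ : ∃ i, x i ≠ y i := by
    by_contra h'; push_neg at h'; exact h (funext h')
  refine ⟨Pi.single i 1, ?_⟩
  have hx : ∀ z : Fin s → AddCircle (1 : ℝ),
      eC (Pi.single i 1) z = (AddCircle.toCircle (z i) : ℂ) := by
    intro z
    rw [eC_apply, Finset.prod_eq_single i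
      (fun j _ hj => by rw [Pi.single_eq_of_ne hj, fourier_zero]) (by simp)]
    rw [Pi.single_eq_same, fourier_one]
  rw [hx, hx]
  intro hc
  have : AddCircle.toCircle (x i) = AddCircle.toCircle (y i) := Circle.coe_inj.mp hc
  exact hi (AddCircle.injective_toCircle one_ne_zero this)

lemma eC_coe (k : Fin s → ℤ) (v : Fin s → ℝ) :
    eC k (fun i => ((v i : ℝ) : AddCircle (1 : ℝ)))
      = Complex.exp (2 * (Real.pi : ℂ) * Complex.I * ((∑ i, (k i : ℝ) * v i : ℝ) : ℂ)) := by
  simp only [eC_apply, fourier_coe_apply, Complex.ofReal_one, div_one]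
  rw [← Complex.exp_sum]
  congr 1
  push_cast
  rw [Finset.mul_sum]
  exact Finset.sum_congr rfl fun i _ => by ring

lemma sum_half {m : ℕ} (c : Fin m → ℝ) (j : Fin m) (h : c j ≠ 0) :
    ∑ i, c i * (if i = j then (2 * c j)⁻¹ else 0) = 2⁻¹ := by
  rw [Finset.sum_eq_single j (fun i _ hij => by rw [if_neg hij, mul_zero]) (by simp)]
  rw [if_pos rfl]
  field_simp

lemma exp_half : Complex.exp (2 * (Real.pi : ℂ) * Complex.I * (((2 : ℝ)⁻¹ : ℝ) : ℂ)) = -1 := by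
  have : 2 * (Real.pi : ℂ) * Complex.I * (((2 : ℝ)⁻¹ : ℝ) : ℂ) = (Real.pi : ℂ) * Complex.I := by
    push_cast; ring
  rw [this, Complex.exp_pi_mul_I]

lemma char_on_orbit {d : ℕ} (A : Matrix (Fin s) (Fin d) ℝ) (k : Fin s → ℤ) (t : Fin d → ℝ) :
    eC k (fun i => ((A.mulVec t i : ℝ) : AddCircle (1 : ℝ)))
      = Complex.exp (2 * (Real.pi : ℂ) * Complex.I *
          ((∑ j, A.transpose.mulVec (fun i => (k i : ℝ)) j * t j : ℝ) : ℂ)) := by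
  rw [eC_coe]
  congr 2
  simp only [Matrix.mulVec, dotProduct, Matrix.transpose_apply, Finset.sum_mul,
    Finset.mul_sum]
  rw [Finset.sum_comm]
  exact congrArg Complex.ofReal
    (Finset.sum_congr rfl fun j _ => Finset.sum_congr rfl fun i _ => by ring)

end Stmt6Aux
end

open Stmt6Aux in
/-- The ℝ^d-action on 𝕋^s given by translation along the linear map with matrix A is
minimal (every orbit is dense) iff Ker(Aᵀ) ∩ ℤ^s = {0}. -/
theorem stmt6 {d s : ℕ} (A : Matrix (Fin s) (Fin d) ℝ) :
    (∀ w : Fin s → AddCircle (1 : ℝ),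
        Dense {y : Fin s → AddCircle (1 : ℝ) |
          ∃ t : Fin d → ℝ, y = w + fun i => ((A.mulVec t i : ℝ) : AddCircle (1 : ℝ))})
      ↔ ∀ k : Fin s → ℤ, A.transpose.mulVec (fun i => (k i : ℝ)) = 0 → k = 0 := by
  haveI : Fact ((0 : ℝ) < 1) := ⟨one_pos⟩
  constructor
  · intro hmin k hk
    by_contra hk0
    obtain ⟨j, hj⟩ : ∃ j, k j ≠ 0 := by
      by_contra h; push_neg at h; exact hk0 (funext h)
    have hdense := hmin 0
    have hclosed : IsClosed {x : Fin s → AddCircle (1 : ℝ) | eC k x = 1} :=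
      isClosed_eq (eC k).continuous continuous_const
    have hsub : {y : Fin s → AddCircle (1 : ℝ) |
        ∃ t : Fin d → ℝ, y = 0 + fun i => ((A.mulVec t i : ℝ) : AddCircle (1 : ℝ))}
        ⊆ {x | eC k x = 1} := by
      rintro y ⟨t, rfl⟩
      show eC k (0 + _) = 1
      rw [zero_add, char_on_orbit A k t, hk]
      simp
    have hall : ∀ x, eC k x = 1 := by
      intro x
      have h1 : closure {y : Fin s → AddCircle (1 : ℝ) |
          ∃ t : Fin d → ℝ, y = 0 + fun i => ((A.mulVec t i : ℝ) : AddCircle (1 : ℝ))}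
          ⊆ {x | eC k x = 1} := hclosed.closure_subset_iff.mpr hsub
      exact h1 (by rw [hdense.closure_eq]; trivial)
    have hx := hall (fun i => (((if i = j then (2 * (k j : ℝ))⁻¹ else 0 : ℝ)) : AddCircle (1 : ℝ)))
    rw [eC_coe k (fun i => if i = j then (2 * (k j : ℝ))⁻¹ else 0),
      sum_half (fun i => (k i : ℝ)) j (by simpa using (Int.cast_ne_zero (α := ℝ)).mpr hj), exp_half] at hx
    norm_num at hx
  · intro hcond w
    set H : AddSubgroup (Fin s → AddCircle (1 : ℝ)) :=
      { carrier := {y | ∃ t : Fin d → ℝ, y = fun i => ((A.mulVec t i : ℝ) : AddCircle (1 : ℝ))}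
        zero_mem' := ⟨0, by funext i; rw [Matrix.mulVec_zero]; simp⟩
        add_mem' := by
          rintro a b ⟨t, rfl⟩ ⟨u, rfl⟩
          exact ⟨t + u, by funext i; rw [Matrix.mulVec_add]; simp⟩
        neg_mem' := by
          rintro a ⟨t, rfl⟩
          exact ⟨-t, by funext i; rw [Matrix.mulVec_neg]; simp⟩ } with hHdef
    have hH : ∀ a : Fin s → ℤ, (∀ x ∈ H, eC a x = 1) → ∀ x, eC a x = 1 := by
      intro k hk1 x
      have hb : A.transpose.mulVec (fun i => (k i : ℝ)) = 0 := by
        by_contra hb0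
        obtain ⟨j, hj⟩ : ∃ j, A.transpose.mulVec (fun i => (k i : ℝ)) j ≠ 0 := by
          by_contra h; push_neg at h; exact hb0 (funext h)
        have hmem := hk1 _ ⟨fun j' =>
          if j' = j then (2 * A.transpose.mulVec (fun i => (k i : ℝ)) j)⁻¹ else 0, rfl⟩
        rw [char_on_orbit, sum_half _ j hj, exp_half] at hmem
        norm_num at hmem
      rw [hcond k hb, eC_zero]
    have hdense : Dense (H : Set (Fin s → AddCircle (1 : ℝ))) :=
      dense_subgroup_of_characters eC eC_pt_add eC_add eC_zero eC_neg eC_sep H hH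
    have himg : {y : Fin s → AddCircle (1 : ℝ) |
        ∃ t : Fin d → ℝ, y = w + fun i => ((A.mulVec t i : ℝ) : AddCircle (1 : ℝ))}
        = (fun y => w + y) '' (H : Set (Fin s → AddCircle (1 : ℝ))) := by
      ext y
      constructor
      · rintro ⟨t, rfl⟩; exact ⟨_, ⟨t, rfl⟩, rfl⟩
      · rintro ⟨z, ⟨t, rfl⟩, rfl⟩; exact ⟨t, rfl⟩
    rw [himg, dense_iff_closure_eq]
    have hco : (fun y => w + y) '' (H : Set (Fin s → AddCircle (1 : ℝ)))
        = (Homeomorph.addLeft w) '' (H : Set (Fin s → AddCircle (1 : ℝ))) := rfl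
    rw [hco, ← Homeomorph.image_closure, hdense.closure_eq, Set.image_univ]
    exact (Homeomorph.addLeft w).surjective.range_eq
end

section
/- If Λ ⊆ ℝ^d is a Delone set with finite local complexity, then the abelian group ⟨Λ − Λ⟩ generated by the difference set Λ − Λ is finitely generated. -/
open Pointwise

/-- If Λ is a Delone set with finite local complexity (Λ − Λ closed and discrete), then the
subgroup of ℝ^d generated by Λ − Λ is finitely generated. -/
theorem stmt9 {d : ℕ} (Λ : Set (EuclideanSpace ℝ (Fin d)))
    (hud : ∃ r > 0, ∀ x ∈ Λ, ∀ y ∈ Λ, x ≠ y → r ≤ dist x y)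
    (hrd : ∃ R > 0, ∀ x : EuclideanSpace ℝ (Fin d), ∃ t ∈ Λ, dist x t ≤ R)
    (hclosed : IsClosed (Λ - Λ)) (hdisc : DiscreteTopology ↥(Λ - Λ)) :
    (AddSubgroup.closure (Λ - Λ)).FG := by
  obtain ⟨R, hR, hRd⟩ := hrd
  set S : Set (EuclideanSpace ℝ (Fin d)) := (Λ - Λ) ∩ Metric.closedBall 0 (3*R) with hSdef
  have hSsub : S ⊆ Λ - Λ := Set.inter_subset_left
  have hSfin : S.Finite := by
    have hcpt : IsCompact S := by
      apply Metric.isCompact_of_isClosed_isBounded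
      · exact hclosed.inter Metric.isClosed_closedBall
      · exact Metric.isBounded_closedBall.subset Set.inter_subset_right
    haveI : DiscreteTopology S := DiscreteTopology.of_subset hdisc hSsub
    exact hcpt.finite ⟨this⟩
  have key : ∀ n : ℕ, ∀ x ∈ Λ, ∀ y ∈ Λ, dist x y ≤ n * R →
      x - y ∈ AddSubgroup.closure S := by
    intro n
    induction n with
    | zero =>
      intro x hx y hy h
      simp only [Nat.cast_zero, zero_mul] at h
      have : x = y := by
        have := dist_nonneg (x := x) (y := y)
        have hxy : dist x y = 0 := le_antisymm h this
        exact dist_eq_zero.mp hxy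
      simp only [this, sub_self]; exact zero_mem _
    | succ n ih =>
      intro x hx y hy h
      by_cases hD : dist x y ≤ 3*R
      · refine AddSubgroup.subset_closure ⟨Set.sub_mem_sub hx hy, ?_⟩
        rw [Metric.mem_closedBall, dist_zero_right, ← dist_eq_norm]
        exact hD
      · push_neg at hD
        have hDpos : 0 < dist x y := lt_trans (by positivity) hD
        set D := dist x y with hDdef
        set z := y + (2*R/D) • (x - y) with hz
        obtain ⟨t, ht, htz⟩ := hRd z
        have hnorm : ‖x - y‖ = D := (dist_eq_norm x y).symm
        have hzy : dist z y = 2*R := by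
          rw [dist_eq_norm, hz, add_sub_cancel_left, norm_smul, Real.norm_eq_abs,
            abs_of_pos (by positivity), hnorm, div_mul_cancel₀ _ hDpos.ne']
        have hxz : dist x z = D - 2*R := by
          have hxzv : x - z = (1 - 2*R/D) • (x - y) := by
            rw [hz]; module
          have hlt : 2*R/D < 1 := by
            rw [div_lt_one hDpos]
            linarith
          rw [dist_eq_norm, hxzv, norm_smul, Real.norm_eq_abs,
            abs_of_pos (by linarith), hnorm]
          field_simp
        have hty : t - y ∈ AddSubgroup.closure S := by
          refine AddSubgroup.subset_closure ⟨Set.sub_mem_sub ht hy, ?_⟩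
          rw [Metric.mem_closedBall, dist_zero_right, ← dist_eq_norm]
          calc dist t y ≤ dist t z + dist z y := dist_triangle t z y
            _ ≤ R + 2*R := by rw [hzy]; gcongr; rwa [dist_comm]
            _ = 3*R := by ring
        have hxt : x - t ∈ AddSubgroup.closure S := by
          apply ih x hx t ht
          have : dist x t ≤ dist x z + dist z t := dist_triangle x z t
          push_cast at h ⊢
          calc dist x t ≤ (D - 2*R) + R := by rw [← hxz]; exact this.trans (by gcongr)
            _ ≤ ((n+1) * R - 2*R) + R := by gcongr
            _ ≤ n * R := by ring_nf; linarith
        have : x - y = (x - t) + (t - y) := (sub_add_sub_cancel x t y).symm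
        rw [this]
        exact add_mem hxt hty
  have hgen : AddSubgroup.closure (Λ - Λ) = AddSubgroup.closure S := by
    apply le_antisymm
    · rw [AddSubgroup.closure_le]
      rintro v ⟨x, hx, y, hy, rfl⟩
      refine key ⌈dist x y / R⌉₊ x hx y hy ?_
      rw [← div_le_iff₀ hR] at *
      exact (Nat.le_ceil _)
    · exact AddSubgroup.closure_mono hSsub
  rw [hgen]
  exact (AddSubgroup.fg_iff _).mpr ⟨S, rfl, hSfin⟩
end

section
/- Let Λ ⊆ ℝ^d be a Delone set. If Λ is a Meyer set, i.e., there is a finite set F ⊆ ℝ^d with Λ − Λ ⊆ Λ + F, then Λ − Λ is uniformly discrete; in particular Λ has finite local complexity. -/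
open Pointwise

/-- A uniformly separated, totally bounded set is finite. -/
lemma sep_totallyBounded_finite {E : Type*} [MetricSpace E] {A : Set E} {r : ℝ}
    (hr : 0 < r) (hsep : ∀ x ∈ A, ∀ y ∈ A, x ≠ y → r ≤ dist x y)
    (htb : TotallyBounded A) : A.Finite := by
  obtain ⟨t, htfin, hcov⟩ := (Metric.totallyBounded_iff.mp htb) (r / 2) (by linarith)
  have : A ⊆ ⋃ y ∈ t, A ∩ Metric.ball y (r / 2) := by
    intro x hx
    obtain ⟨y, hy, hxy⟩ := Set.mem_iUnion₂.mp (hcov hx)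
    exact Set.mem_iUnion₂.mpr ⟨y, hy, hx, hxy⟩
  refine Set.Finite.subset (Set.Finite.biUnion htfin fun y _ => ?_) this
  refine Set.Subsingleton.finite ?_
  intro a ⟨haA, ha⟩ b ⟨hbA, hb⟩
  by_contra hab
  have := hsep a haA b hbA hab
  have : dist a b ≤ dist a y + dist y b := dist_triangle a y b
  rw [dist_comm y b] at this
  simp only [Metric.mem_ball] at ha hb
  linarith [hsep a haA b hbA hab]

/-- A uniformly separated set is closed and has discrete topology. -/
lemma sep_closed_discrete {E : Type*} [MetricSpace E] {A : Set E} {r : ℝ}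
    (hr : 0 < r) (hsep : ∀ x ∈ A, ∀ y ∈ A, x ≠ y → r ≤ dist x y) :
    IsClosed A ∧ DiscreteTopology ↥A := by
  constructor
  · rw [← closure_eq_iff_isClosed]
    refine Set.Subset.antisymm ?_ subset_closure
    intro a ha
    obtain ⟨b, hb, hab⟩ := Metric.mem_closure_iff.mp ha (r / 2) (by linarith)
    by_contra haA
    have hane : a ≠ b := fun h => haA (h ▸ hb)
    have hd : 0 < dist a b := dist_pos.mpr hane
    obtain ⟨b', hb', hab'⟩ := Metric.mem_closure_iff.mp ha (min (dist a b) (r - dist a b))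
      (lt_min hd (by linarith))
    have hne : b' ≠ b := by
      intro h
      rw [h] at hab'
      exact absurd (lt_of_lt_of_le hab' (min_le_left _ _)) (lt_irrefl _)
    have : dist b b' ≤ dist b a + dist a b' := dist_triangle b a b'
    rw [dist_comm b a] at this
    have h2 : dist a b' < r - dist a b := lt_of_lt_of_le hab' (min_le_right _ _)
    have := hsep b' hb' b hb hne
    rw [dist_comm b' b] at this
    linarith
  · rw [discreteTopology_iff_isOpen_singleton]
    rintro ⟨x, hx⟩
    have : ({(⟨x, hx⟩ : A)} : Set A) = (Subtype.val) ⁻¹' (Metric.ball x r) := by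
      ext ⟨y, hy⟩
      simp only [Set.mem_singleton_iff, Set.mem_preimage, Metric.mem_ball, Subtype.mk.injEq]
      constructor
      · rintro rfl; simpa using hr
      · intro h
        by_contra hne
        exact absurd h (not_lt.mpr (hsep y hy x hx hne))
    rw [this]
    exact (Metric.isOpen_ball).preimage continuous_subtype_val

/-- If Λ is a Delone set and a Meyer set (Λ − Λ ⊆ Λ + F for a finite F), then Λ − Λ is
uniformly discrete; in particular Λ has finite local complexity (Λ − Λ closed and discrete). -/
theorem stmt10 {d : ℕ} (Λ : Set (EuclideanSpace ℝ (Fin d)))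
    (hud : ∃ r > 0, ∀ x ∈ Λ, ∀ y ∈ Λ, x ≠ y → r ≤ dist x y)
    (hrd : ∃ R > 0, ∀ x : EuclideanSpace ℝ (Fin d), ∃ t ∈ Λ, dist x t ≤ R)
    (F : Set (EuclideanSpace ℝ (Fin d))) (hF : F.Finite)
    (hMeyer : Λ - Λ ⊆ Λ + F) :
    (∃ r' > 0, ∀ x ∈ Λ - Λ, ∀ y ∈ Λ - Λ, x ≠ y → r' ≤ dist x y) ∧
      IsClosed (Λ - Λ) ∧ DiscreteTopology ↥(Λ - Λ) := by
  obtain ⟨r, hr, hsep⟩ := hud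
  -- The finite set S = F + (F - F)
  set S : Set (EuclideanSpace ℝ (Fin d)) := F + (F - F) with hS
  have hSfin : S.Finite := hF.add (hF.sub hF)
  -- Key: differences of elements of Λ - Λ land in Λ + S
  have hkey : ∀ x ∈ Λ - Λ, ∀ y ∈ Λ - Λ, x - y ∈ Λ + S := by
    rintro x hx y hy
    obtain ⟨a, ha, b, hb, rfl⟩ := hx
    obtain ⟨c, hc, e, he, rfl⟩ := hy
    have h1 : a - c ∈ Λ + F := hMeyer ⟨a, ha, c, hc, rfl⟩
    obtain ⟨p, hp, f, hf, hpf⟩ := h1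
    have h2 : b - e ∈ Λ + F := hMeyer ⟨b, hb, e, he, rfl⟩
    obtain ⟨q, hq, g, hg, hqg⟩ := h2
    have h3 : p - q ∈ Λ + F := hMeyer ⟨p, hp, q, hq, rfl⟩
    obtain ⟨u, hu, h, hh, huh⟩ := h3
    refine ⟨u, hu, h + (f - g), ⟨h, hh, f - g, ⟨f, hf, g, hg, rfl⟩, rfl⟩, ?_⟩
    have e1 : a - c = p + f := hpf.symm
    have e2 : b - e = q + g := hqg.symm
    have e3 : u + h = p - q := huh
    show u + (h + (f - g)) = (a - b) - (c - e)
    have e4 : (a - b) - (c - e) = (a - c) - (b - e) := by abel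
    rw [e4, e1, e2]
    have e5 : p + f - (q + g) = (p - q) + (f - g) := by abel
    rw [e5, ← e3]; abel
  -- Λ intersected with any closed ball is finite
  have hΛball : ∀ c : EuclideanSpace ℝ (Fin d), (Λ ∩ Metric.closedBall c 1).Finite := by
    intro c
    refine sep_totallyBounded_finite hr
      (fun x hx y hy hxy => hsep x hx.1 y hy.1 hxy) ?_
    exact TotallyBounded.subset Set.inter_subset_right
      (isCompact_closedBall c 1).totallyBounded
  -- (Λ + S) ∩ closed ball 0 1 is finite
  have hNfin : ((Λ + S) ∩ Metric.closedBall 0 1).Finite := by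
    have hsub : (Λ + S) ∩ Metric.closedBall 0 1 ⊆
        ⋃ s ∈ S, (fun p => p + s) '' (Λ ∩ Metric.closedBall (-s) 1) := by
      rintro z ⟨⟨p, hp, s, hs, rfl⟩, hz⟩
      refine Set.mem_iUnion₂.mpr ⟨s, hs, p, ⟨hp, ?_⟩, rfl⟩
      rw [Metric.mem_closedBall] at hz ⊢
      have : dist p (-s) = dist (p + s) 0 := by
        rw [dist_eq_norm, dist_eq_norm, sub_neg_eq_add, sub_zero]
      rw [this]; exact hz
    exact Set.Finite.subset
      (Set.Finite.biUnion hSfin fun s _ => (hΛball (-s)).image _) hsub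
  -- Extract a positive lower bound for norms of nonzero elements of the ball intersection
  set N : Set (EuclideanSpace ℝ (Fin d)) :=
    ((Λ + S) ∩ Metric.closedBall 0 1) \ {0} with hN
  have hNfin' : N.Finite := hNfin.diff
  have hbound : ∃ c > 0, ∀ z ∈ N, c ≤ ‖z‖ := by
    rcases N.eq_empty_or_nonempty with hemp | hne
    · exact ⟨1, one_pos, by simp [hemp]⟩
    · obtain ⟨a, haN, hmin⟩ := Set.exists_min_image N norm hNfin' hne
      refine ⟨‖a‖, norm_pos_iff.mpr ?_, hmin⟩
      exact haN.2
  obtain ⟨c, hc, hcb⟩ := hbound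
  have hsep' : ∀ x ∈ Λ - Λ, ∀ y ∈ Λ - Λ, x ≠ y → min c 1 ≤ dist x y := by
    intro x hx y hy hxy
    have hz : x - y ∈ Λ + S := hkey x hx y hy
    have hzne : x - y ≠ 0 := sub_ne_zero.mpr hxy
    rw [dist_eq_norm]
    by_cases hle : ‖x - y‖ ≤ 1
    · have : x - y ∈ N := ⟨⟨hz, by simpa [Metric.mem_closedBall, dist_eq_norm] using hle⟩, hzne⟩
      exact le_trans (min_le_left _ _) (hcb _ this)
    · exact le_trans (min_le_right _ _) (le_of_not_ge hle)
  refine ⟨⟨min c 1, lt_min hc one_pos, hsep'⟩, ?_⟩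
  exact sep_closed_discrete (lt_min hc one_pos) hsep'
end
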